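/- arXiv:1301.5505 — 2 statements merged into one kernel-verified Lean document; each statement's English description precedes it below -/
import Mathlib

section
/- On the isotropic cone Ξ ⊂ ℝ^{p,q}, the differential operators P_j := ε_j x_j □ − (2E + p + q − 2) ∂/∂x_j (1 ≤ j ≤ p+q), where □ = Σ_a ε_a ∂²/∂x_a² and E = Σ_a x_a ∂/∂x_a, are tangential to Ξ: if f is a smooth function on ℝ^{p+q}∖{0} vanishing on Ξ, then P_j f also vanishes on Ξ. -/
open MeasureTheory

variable (p q : ℕ)

/-- The signs `ε_a = 1` for `a ≤ p`, `ε_a = -1` for `a > p` (0-indexed: `a < p`). -/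
def epsSign (p : ℕ) {m : ℕ} (a : Fin m) : ℝ := if (a : ℕ) < p then 1 else -1

/-- The quadratic form `Q(x) = Σ_a ε_a x_a²` of signature `(p,q)` on `ℝ^{p+q}`. -/
def quadQ (p q : ℕ) (x : EuclideanSpace ℝ (Fin (p + q))) : ℝ :=
  ∑ a : Fin (p + q), epsSign p a * (x a) ^ 2

/-- The partial derivative `∂f/∂x_a`. -/
noncomputable def pd (p q : ℕ) (a : Fin (p + q)) (f : EuclideanSpace ℝ (Fin (p + q)) → ℝ)
    (x : EuclideanSpace ℝ (Fin (p + q))) : ℝ :=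
  fderiv ℝ f x (EuclideanSpace.single a 1)

/-- The ultrahyperbolic Laplacian `□ = Σ_a ε_a ∂²/∂x_a²`. -/
noncomputable def boxOp (p q : ℕ) (f : EuclideanSpace ℝ (Fin (p + q)) → ℝ)
    (x : EuclideanSpace ℝ (Fin (p + q))) : ℝ :=
  ∑ a : Fin (p + q), epsSign p a * pd p q a (pd p q a f) x

/-- The Euler operator `E = Σ_a x_a ∂/∂x_a`. -/
noncomputable def eulerOp (p q : ℕ) (f : EuclideanSpace ℝ (Fin (p + q)) → ℝ)
    (x : EuclideanSpace ℝ (Fin (p + q))) : ℝ :=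
  ∑ a : Fin (p + q), x a * pd p q a f x

/-- The operator `P_j = ε_j x_j □ - (2E + p + q - 2) ∘ ∂/∂x_j`. -/
noncomputable def fundOp (p q : ℕ) (j : Fin (p + q)) (f : EuclideanSpace ℝ (Fin (p + q)) → ℝ)
    (x : EuclideanSpace ℝ (Fin (p + q))) : ℝ :=
  epsSign p j * x j * boxOp p q f x -
    (2 * eulerOp p q (pd p q j f) x + ((p : ℝ) + (q : ℝ) - 2) * pd p q j f x)

section FundAuxSection
open Filter Topology

namespace FundAux


/-- The bilinear form associated to the quadratic form. -/
def Bq (p : ℕ) {m : ℕ} (u w : EuclideanSpace ℝ (Fin m)) : ℝ :=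
  ∑ a, epsSign p a * u a * w a

/-- The "flipped sign" vector `a ↦ ε_a x_a`. -/
def xv (p : ℕ) {m : ℕ} (x : EuclideanSpace ℝ (Fin m)) : EuclideanSpace ℝ (Fin m) :=
  WithLp.toLp 2 (fun a => epsSign p a * x a)

variable {m : ℕ} (p q : ℕ)

lemma quadQ_eq_Bq (x : EuclideanSpace ℝ (Fin (p + q))) : quadQ p q x = Bq p x x :=
  Finset.sum_congr rfl fun a _ => by ring

lemma Bq_symm (u w : EuclideanSpace ℝ (Fin m)) : Bq p u w = Bq p w u :=
  Finset.sum_congr rfl fun a _ => by ring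

lemma Bq_add_right (u v w : EuclideanSpace ℝ (Fin m)) :
    Bq p u (v + w) = Bq p u v + Bq p u w := by
  unfold Bq
  rw [← Finset.sum_add_distrib]
  exact Finset.sum_congr rfl fun a _ => by
    simp [PiLp.add_apply]; ring

lemma Bq_sub_right (u v w : EuclideanSpace ℝ (Fin m)) :
    Bq p u (v - w) = Bq p u v - Bq p u w := by
  unfold Bq
  rw [← Finset.sum_sub_distrib]
  exact Finset.sum_congr rfl fun a _ => by
    simp [PiLp.sub_apply]; ring

lemma Bq_smul_right (r : ℝ) (u w : EuclideanSpace ℝ (Fin m)) :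
    Bq p u (r • w) = r * Bq p u w := by
  unfold Bq
  rw [Finset.mul_sum]
  exact Finset.sum_congr rfl fun a _ => by
    simp [PiLp.smul_apply, smul_eq_mul]; ring

lemma Bq_xi_xi (x : EuclideanSpace ℝ (Fin m)) : Bq p (xv p x) (xv p x) = Bq p x x := by
  refine Finset.sum_congr rfl fun a _ => ?_
  by_cases h : (a : ℕ) < p <;> simp [xv, epsSign, h]

lemma Bq_x_xi (x : EuclideanSpace ℝ (Fin m)) : Bq p x (xv p x) = ∑ a, (x a) ^ 2 := by
  refine Finset.sum_congr rfl fun a _ => ?_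
  by_cases h : (a : ℕ) < p <;> simp [xv, epsSign, h] <;> ring

lemma Bq_x_single (x : EuclideanSpace ℝ (Fin m)) (i : Fin m) :
    Bq p x (EuclideanSpace.single i (1:ℝ)) = epsSign p i * x i := by
  unfold Bq
  simp [EuclideanSpace.single_apply]

lemma Bq_xi_single (x : EuclideanSpace ℝ (Fin m)) (i : Fin m) :
    Bq p (xv p x) (EuclideanSpace.single i (1:ℝ)) = x i := by
  unfold Bq
  rw [Finset.sum_eq_single i]
  · by_cases h : (i : ℕ) < p <;> simp [xv, epsSign, h]
  · intro b _ hb; simp [EuclideanSpace.single_apply, hb]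
  · simp

lemma Bq_single_self (i : Fin m) :
    Bq p (EuclideanSpace.single i (1:ℝ)) (EuclideanSpace.single i (1:ℝ)) = epsSign p i := by
  unfold Bq
  rw [Finset.sum_eq_single i]
  · simp
  · intro b _ hb; simp [EuclideanSpace.single_apply, hb]
  · simp

lemma Bq_zero_right (u : EuclideanSpace ℝ (Fin m)) : Bq p u (0 : EuclideanSpace ℝ (Fin m)) = 0 := by
  unfold Bq
  refine Finset.sum_eq_zero fun a _ => by simp

lemma quad_comb (x v w : EuclideanSpace ℝ (Fin (p + q))) (α β δ : ℝ) :
    quadQ p q (α • x + β • v + δ • w) =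
      α^2 * Bq p x x + β^2 * Bq p v v + δ^2 * Bq p w w
        + 2*(α*β) * Bq p x v + 2*(α*δ) * Bq p x w + 2*(β*δ) * Bq p v w := by
  unfold quadQ Bq
  simp only [Finset.mul_sum, ← Finset.sum_add_distrib]
  refine Finset.sum_congr rfl fun a _ => ?_
  simp only [PiLp.add_apply, PiLp.smul_apply, smul_eq_mul]
  ring

lemma sum_single_smul (x : EuclideanSpace ℝ (Fin m)) :
    ∑ a, x a • EuclideanSpace.single a (1:ℝ) = x := by
  simpa [EuclideanSpace.basisFun_apply] using (EuclideanSpace.basisFun (Fin m) ℝ).sum_repr x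

lemma R_pos (x : EuclideanSpace ℝ (Fin m)) (hx : x ≠ 0) : 0 < ∑ a, (x a) ^ 2 := by
  have : ∃ a, x a ≠ 0 := by
    by_contra h; push_neg at h; exact hx (by ext a; simpa using h a)
  obtain ⟨a, ha⟩ := this
  exact Finset.sum_pos' (fun b _ => sq_nonneg _)
    ⟨a, Finset.mem_univ a, by positivity⟩


theorem curve_key (p q : ℕ) (f : EuclideanSpace ℝ (Fin (p+q)) → ℝ)
    (hf : ContDiffOn ℝ (⊤ : ℕ∞) f {(0 : EuclideanSpace ℝ (Fin (p+q)))}ᶜ)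
    (hvan : ∀ x : EuclideanSpace ℝ (Fin (p + q)), x ≠ 0 → quadQ p q x = 0 → f x = 0)
    (x0 : EuclideanSpace ℝ (Fin (p+q))) (hx0 : x0 ≠ 0) (hQ0 : quadQ p q x0 = 0)
    (v : EuclideanSpace ℝ (Fin (p+q))) (h1 : Bq p x0 v = 0) (h2 : Bq p (xv p x0) v = 0)
    (a : ℝ) :
    fderiv ℝ f x0 (v + a • x0) = 0 ∧
      (∑ b, (x0 b)^2) * (fderiv ℝ (fderiv ℝ f) x0 (v + a • x0) (v + a • x0)) =
        Bq p v v * (fderiv ℝ f x0 (xv p x0)) - 2*a*(∑ b, (x0 b)^2) * (fderiv ℝ f x0 v) := by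
  set R : ℝ := ∑ b, (x0 b)^2 with hRdef
  have hR : 0 < R := R_pos x0 hx0
  have hRne : R ≠ 0 := ne_of_gt hR
  set ξ : EuclideanSpace ℝ (Fin (p+q)) := xv p x0 with hξdef
  set c : ℝ := -(Bq p v v) / (2*R) with hcdef
  set γ : ℝ → EuclideanSpace ℝ (Fin (p+q)) :=
    fun t => (1 + a*t) • x0 + (t + a*t^2) • v + (c*t^2 + a*c*t^3) • ξ with hγdef
  have hγ0 : γ 0 = x0 := by simp [hγdef]
  -- the curve stays on the cone
  have hQγ : ∀ t, quadQ p q (γ t) = 0 := by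
    intro t
    rw [hγdef]
    rw [quad_comb p q x0 v ξ (1 + a*t) (t + a*t^2) (c*t^2 + a*c*t^3)]
    rw [← quadQ_eq_Bq p q x0]
    have hbxξ : Bq p x0 ξ = R := Bq_x_xi p x0
    have hbξξ : Bq p ξ ξ = Bq p x0 x0 := Bq_xi_xi p x0
    have hbvξ : Bq p v ξ = 0 := by rw [Bq_symm]; exact h2
    rw [hQ0, hbxξ, hbξξ, ← quadQ_eq_Bq p q x0, hQ0, h1, hbvξ, hcdef]
    field_simp
    ring
  -- the curve is eventually nonzero
  have hcont : Continuous γ := by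
    rw [hγdef]; fun_prop
  have hne : ∀ᶠ t in 𝓝 (0:ℝ), γ t ≠ 0 :=
    hcont.continuousAt.eventually_ne (by rw [hγ0]; exact hx0)
  have hfγ : ∀ᶠ t in 𝓝 (0:ℝ), f (γ t) = 0 := by
    filter_upwards [hne] with t ht
    exact hvan (γ t) ht (hQγ t)
  -- differentiability facts
  have hcd : ∀ y : EuclideanSpace ℝ (Fin (p+q)), y ≠ 0 → ContDiffAt ℝ (⊤ : ℕ∞) f y := fun y hy =>
    hf.contDiffAt (isOpen_compl_singleton.mem_nhds hy)
  have hdf : ∀ y : EuclideanSpace ℝ (Fin (p+q)), y ≠ 0 → HasFDerivAt f (fderiv ℝ f y) y :=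
    fun y hy => ((hcd y hy).differentiableAt (by simp)).hasFDerivAt
  have hd2 : DifferentiableAt ℝ (fderiv ℝ f) x0 :=
    ((hcd x0 hx0).fderiv_right (m := 1) (WithTop.coe_le_coe.mpr le_top)).differentiableAt one_ne_zero
  -- the derivative curve
  set ψ : ℝ → EuclideanSpace ℝ (Fin (p+q)) :=
    fun t => a • x0 + (1 + 2*a*t) • v + (2*c*t + 3*a*c*t^2) • ξ with hψdef
  have hγ' : ∀ t, HasDerivAt γ (ψ t) t := by
    intro t
    have hP1 : HasDerivAt (fun s : ℝ => 1 + a*s) a t := by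
      exact ((hasDerivAt_const t (1:ℝ)).add ((hasDerivAt_id t).const_mul a)).congr_deriv (by simp)
    have hP2 : HasDerivAt (fun s : ℝ => s + a*s^2) (1 + 2*a*t) t := by
      have := (hasDerivAt_id t).add ((hasDerivAt_pow 2 t).const_mul a)
      exact this.congr_deriv (by ring)
    have hP3 : HasDerivAt (fun s : ℝ => c*s^2 + a*c*s^3) (2*c*t + 3*a*c*t^2) t := by
      have := ((hasDerivAt_pow 2 t).const_mul c).add ((hasDerivAt_pow 3 t).const_mul (a*c))
      exact this.congr_deriv (by ring)
    exact ((hP1.smul_const x0).add (hP2.smul_const v)).add (hP3.smul_const ξ)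
  -- the function G t = df(γ t)(ψ t) vanishes near 0
  set G : ℝ → ℝ := fun t => fderiv ℝ f (γ t) (ψ t) with hGdef
  have hG0 : G =ᶠ[𝓝 (0:ℝ)] 0 := by
    filter_upwards [hfγ.eventually_nhds, hne] with t ht hnet
    have hF0 : (fun s => f (γ s)) =ᶠ[𝓝 t] (fun _ => (0:ℝ)) := ht
    have hd : HasDerivAt (fun s => f (γ s)) (fderiv ℝ f (γ t) (ψ t)) t :=
      (hdf (γ t) hnet).comp_hasDerivAt t (hγ' t)
    have hd0 : HasDerivAt (fun s => f (γ s)) 0 t := by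
      rw [hF0.hasDerivAt_iff]
      simpa using hasDerivAt_const t (0:ℝ)
    exact hd.unique hd0
  have hψ0 : ψ 0 = v + a • x0 := by
    rw [hψdef]
    simp
    module
  -- first-order conclusion
  have hfirst : fderiv ℝ f x0 (v + a • x0) = 0 := by
    have h := hG0.self_of_nhds
    rw [hGdef] at h
    simp only at h
    rw [hγ0, hψ0] at h
    exact h
  refine ⟨hfirst, ?_⟩
  -- second-order: differentiate G at 0
  set S := fderiv ℝ (fderiv ℝ f) x0 with hSdef
  have hΦ : HasDerivAt (fun t => fderiv ℝ f (γ t)) (S (ψ 0)) 0 := by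
    have hS : HasFDerivAt (fderiv ℝ f) S (γ 0) := by rw [hγ0]; exact hd2.hasFDerivAt
    exact hS.comp_hasDerivAt 0 (hγ' 0)
  have hψd : HasDerivAt ψ ((2*a) • v + (2*c) • ξ) 0 := by
    have hc1 : HasDerivAt (fun _ : ℝ => a • x0) (0 : EuclideanSpace ℝ (Fin (p+q))) 0 :=
      hasDerivAt_const 0 (a • x0)
    have hc2 : HasDerivAt (fun s : ℝ => 1 + 2*a*s) (2*a) 0 := by
      exact ((hasDerivAt_const (0:ℝ) (1:ℝ)).add ((hasDerivAt_id (0:ℝ)).const_mul (2*a))).congr_deriv (by simp)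
    have hc3 : HasDerivAt (fun s : ℝ => 2*c*s + 3*a*c*s^2) (2*c) 0 := by
      have := ((hasDerivAt_id (0:ℝ)).const_mul (2*c)).add
        ((hasDerivAt_pow 2 (0:ℝ)).const_mul (3*a*c))
      exact this.congr_deriv (by ring)
    have := (hc1.add (hc2.smul_const v)).add (hc3.smul_const ξ)
    exact this.congr_deriv (by simp)
  have hGd : HasDerivAt G (S (ψ 0) (ψ 0) + fderiv ℝ f (γ 0) ((2*a) • v + (2*c) • ξ)) 0 :=
    hΦ.clm_apply hψd
  have hzero : HasDerivAt G 0 0 := by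
    rw [hG0.hasDerivAt_iff]
    simpa using hasDerivAt_const (0:ℝ) (0:ℝ)
  have heq : S (ψ 0) (ψ 0) + fderiv ℝ f (γ 0) ((2*a) • v + (2*c) • ξ) = 0 :=
    hGd.unique hzero
  rw [hγ0, hψ0] at heq
  simp only [_root_.map_add, _root_.map_smul, ContinuousLinearMap.add_apply, ContinuousLinearMap.coe_smul',
    Pi.smul_apply, smul_eq_mul] at heq ⊢
  have hc2R : 2*c*R = -(Bq p v v) := by
    rw [hcdef]
    field_simp
  linear_combination R * heq - fderiv ℝ f x0 ξ * hc2R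


theorem sym_snd (p q : ℕ) (f : EuclideanSpace ℝ (Fin (p+q)) → ℝ)
    (hf : ContDiffOn ℝ (⊤ : ℕ∞) f {(0 : EuclideanSpace ℝ (Fin (p+q)))}ᶜ)
    (x0 : EuclideanSpace ℝ (Fin (p+q))) (hx0 : x0 ≠ 0) (v w : EuclideanSpace ℝ (Fin (p+q))) :
    fderiv ℝ (fderiv ℝ f) x0 v w = fderiv ℝ (fderiv ℝ f) x0 w v := by
  have hev : ∀ᶠ y in 𝓝 x0, HasFDerivAt f (fderiv ℝ f y) y := by
    filter_upwards [isOpen_compl_singleton.mem_nhds hx0] with y hy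
    exact ((hf.contDiffAt (isOpen_compl_singleton.mem_nhds hy)).differentiableAt (by simp)).hasFDerivAt
  have hd2 : DifferentiableAt ℝ (fderiv ℝ f) x0 :=
    ((hf.contDiffAt (isOpen_compl_singleton.mem_nhds hx0)).fderiv_right (m := 1)
      (WithTop.coe_le_coe.mpr le_top)).differentiableAt one_ne_zero
  exact second_derivative_symmetric_of_eventually hev hd2.hasFDerivAt v w

theorem df_formula (p q : ℕ) (f : EuclideanSpace ℝ (Fin (p+q)) → ℝ)
    (hf : ContDiffOn ℝ (⊤ : ℕ∞) f {(0 : EuclideanSpace ℝ (Fin (p+q)))}ᶜ)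
    (hvan : ∀ x : EuclideanSpace ℝ (Fin (p + q)), x ≠ 0 → quadQ p q x = 0 → f x = 0)
    (x0 : EuclideanSpace ℝ (Fin (p+q))) (hx0 : x0 ≠ 0) (hQ0 : quadQ p q x0 = 0)
    (u : EuclideanSpace ℝ (Fin (p+q))) :
    (∑ b, (x0 b)^2) * fderiv ℝ f x0 u = Bq p x0 u * fderiv ℝ f x0 (xv p x0) := by
  set R : ℝ := ∑ b, (x0 b)^2 with hRdef
  set ξ : EuclideanSpace ℝ (Fin (p+q)) := xv p x0 with hξdef
  have hbxx : Bq p x0 x0 = 0 := by rw [← quadQ_eq_Bq p q]; exact hQ0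
  have hbxξ : Bq p x0 ξ = R := Bq_x_xi p x0
  have hbξx : Bq p ξ x0 = R := by rw [Bq_symm]; exact hbxξ
  have hbξξ : Bq p ξ ξ = 0 := by rw [hξdef, Bq_xi_xi]; exact hbxx
  have hdfx0 : fderiv ℝ f x0 x0 = 0 := by
    have h := (curve_key p q f hf hvan x0 hx0 hQ0 0 (Bq_zero_right p x0)
      (Bq_zero_right p ξ) 1).1
    simpa using h
  set D : ℝ := Bq p ξ u with hDdef
  set Cc : ℝ := Bq p x0 u with hCdef
  set w : EuclideanSpace ℝ (Fin (p+q)) := R • u - D • x0 - Cc • ξ with hwdef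
  have hw1 : Bq p x0 w = 0 := by
    rw [hwdef, Bq_sub_right, Bq_sub_right, Bq_smul_right, Bq_smul_right, Bq_smul_right,
      hbxx, hbxξ]
    ring
  have hw2 : Bq p ξ w = 0 := by
    rw [hwdef, Bq_sub_right, Bq_sub_right, Bq_smul_right, Bq_smul_right, Bq_smul_right,
      hbξx, hbξξ]
    ring
  have hdfw : fderiv ℝ f x0 w = 0 := by
    have h := (curve_key p q f hf hvan x0 hx0 hQ0 w hw1 hw2 0).1
    simpa using h
  have hu : (R : ℝ) • u = w + D • x0 + Cc • ξ := by rw [hwdef]; module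
  have happ : fderiv ℝ f x0 (R • u) = fderiv ℝ f x0 (w + D • x0 + Cc • ξ) := by rw [hu]
  simp only [_root_.map_add, _root_.map_smul, smul_eq_mul, hdfw, hdfx0] at happ
  linarith [happ]

theorem master (p q : ℕ) (f : EuclideanSpace ℝ (Fin (p+q)) → ℝ)
    (hf : ContDiffOn ℝ (⊤ : ℕ∞) f {(0 : EuclideanSpace ℝ (Fin (p+q)))}ᶜ)
    (hvan : ∀ x : EuclideanSpace ℝ (Fin (p + q)), x ≠ 0 → quadQ p q x = 0 → f x = 0)
    (x0 : EuclideanSpace ℝ (Fin (p+q))) (hx0 : x0 ≠ 0) (hQ0 : quadQ p q x0 = 0)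
    (u : EuclideanSpace ℝ (Fin (p+q))) :
    (∑ b, (x0 b)^2)^3 * fderiv ℝ (fderiv ℝ f) x0 u u =
      ((∑ b, (x0 b)^2)^2 * Bq p u u - 2 * Bq p x0 u * Bq p (xv p x0) u * (∑ b, (x0 b)^2))
          * fderiv ℝ f x0 (xv p x0)
        + 2 * Bq p x0 u * (∑ b, (x0 b)^2)^2 * fderiv ℝ (fderiv ℝ f) x0 (xv p x0) u
        - (Bq p x0 u)^2 * (∑ b, (x0 b)^2)
          * fderiv ℝ (fderiv ℝ f) x0 (xv p x0) (xv p x0) := by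
  set R : ℝ := ∑ b, (x0 b)^2 with hRdef
  have hR : 0 < R := R_pos x0 hx0
  have hRne : R ≠ 0 := ne_of_gt hR
  set ξ : EuclideanSpace ℝ (Fin (p+q)) := xv p x0 with hξdef
  set S := fderiv ℝ (fderiv ℝ f) x0 with hSdef
  have hsym : ∀ y z, S y z = S z y := sym_snd p q f hf x0 hx0
  have hbxx : Bq p x0 x0 = 0 := by rw [← quadQ_eq_Bq p q]; exact hQ0
  have hbxξ : Bq p x0 ξ = R := Bq_x_xi p x0
  have hbξx : Bq p ξ x0 = R := by rw [Bq_symm]; exact hbxξ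
  have hbξξ : Bq p ξ ξ = 0 := by rw [hξdef, Bq_xi_xi]; exact hbxx
  have hdfx0 : fderiv ℝ f x0 x0 = 0 := by
    have h := (curve_key p q f hf hvan x0 hx0 hQ0 0 (Bq_zero_right p x0)
      (Bq_zero_right p ξ) 1).1
    simpa using h
  set D : ℝ := Bq p ξ u with hDdef
  set Cc : ℝ := Bq p x0 u with hCdef
  set w : EuclideanSpace ℝ (Fin (p+q)) := R • u - D • x0 - Cc • ξ with hwdef
  have hw1 : Bq p x0 w = 0 := by
    rw [hwdef, Bq_sub_right, Bq_sub_right, Bq_smul_right, Bq_smul_right, Bq_smul_right,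
      hbxx, hbxξ]
    ring
  have hw2 : Bq p ξ w = 0 := by
    rw [hwdef, Bq_sub_right, Bq_sub_right, Bq_smul_right, Bq_smul_right, Bq_smul_right,
      hbξx, hbξξ]
    ring
  have hdfw : fderiv ℝ f x0 w = 0 := by
    have h := (curve_key p q f hf hvan x0 hx0 hQ0 w hw1 hw2 0).1
    simpa using h
  have hu : (R : ℝ) • u = w + D • x0 + Cc • ξ := by rw [hwdef]; module
  -- second-order information from the curves
  have hS0 : ∀ a : ℝ, R * S (w + a • x0) (w + a • x0) =
      Bq p w w * fderiv ℝ f x0 ξ - 2*a*R*(fderiv ℝ f x0 w) :=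
    fun a => (curve_key p q f hf hvan x0 hx0 hQ0 w hw1 hw2 a).2
  have hexp : ∀ y z : EuclideanSpace ℝ (Fin (p+q)),
      S (y + z) (y + z) = S y y + S y z + S z y + S z z := by
    intro y z
    simp only [_root_.map_add, ContinuousLinearMap.add_apply]
    ring
  have h0 : R * S w w = Bq p w w * fderiv ℝ f x0 ξ := by
    have h := hS0 0
    simpa using h
  have hplus := hS0 1
  have hminus := hS0 (-1)
  rw [one_smul, hexp] at hplus
  rw [neg_one_smul] at hminus
  have hexp2 : S (w + -x0) (w + -x0) = S w w - S w x0 - S x0 w + S x0 x0 := by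
    simp only [_root_.map_add, _root_.map_neg, ContinuousLinearMap.add_apply, ContinuousLinearMap.neg_apply]
    ring
  rw [hexp2] at hminus
  have hSxx : S x0 x0 = 0 := by
    have h : R * (2 * S x0 x0) = 0 := by linear_combination hplus + hminus - 2*h0
    have := mul_eq_zero.mp h
    rcases this with h' | h'
    · exact absurd h' hRne
    · linarith
  have hSxw : S x0 w = 0 := by
    have h : R * (4 * S x0 w) = 0 := by
      linear_combination hplus - hminus + 2*R*(hsym x0 w) - 4*R*hdfw
    have := mul_eq_zero.mp h
    rcases this with h' | h'
    · exact absurd h' hRne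
    · linarith
  -- value of Bq w w
  have hBww : Bq p w w = R^2 * Bq p u u - 2*Cc*D*R := by
    have e2 : ∀ z, Bq p z w = R * Bq p z u - D * Bq p z x0 - Cc * Bq p z ξ := by
      intro z
      rw [hwdef, Bq_sub_right, Bq_sub_right, Bq_smul_right, Bq_smul_right, Bq_smul_right]
    rw [Bq_symm, e2, Bq_symm p w u, e2, Bq_symm p w x0, e2, Bq_symm p w ξ, e2]
    rw [hbxx, hbξξ, hbξx, hbxξ]
    rw [Bq_symm p u x0, ← hCdef, Bq_symm p u ξ, ← hDdef]
    ring
  -- expansion of S (R•u) (R•u)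
  have hSuu : R^2 * S u u = S w w + 2*Cc*(S ξ w) + 2*D*Cc*(S ξ x0) + Cc^2 * (S ξ ξ) := by
    have h : S (R • u) (R • u) = S (w + D • x0 + Cc • ξ) (w + D • x0 + Cc • ξ) := by rw [hu]
    simp only [_root_.map_add, _root_.map_smul, ContinuousLinearMap.add_apply,
      ContinuousLinearMap.coe_smul', Pi.smul_apply, smul_eq_mul] at h
    rw [hsym w x0, hSxw, hsym x0 ξ, hsym w ξ, hSxx] at h
    linarith [h]
  -- S ξ w in terms of S ξ u
  have hSξw : S ξ w = R * S ξ u - D * S ξ x0 - Cc * S ξ ξ := by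
    have h : S ξ (R • u) = S ξ (w + D • x0 + Cc • ξ) := by rw [hu]
    simp only [_root_.map_add, _root_.map_smul, smul_eq_mul] at h
    linarith [h]
  -- assemble
  have final : R * (R^2 * S u u) =
      (R^2 * Bq p u u - 2*Cc*D*R) * fderiv ℝ f x0 ξ
        + 2*Cc*R^2*(S ξ u) - Cc^2*R*(S ξ ξ) := by
    linear_combination R * hSuu + h0 + (fderiv ℝ f x0 ξ) * hBww + 2*Cc*R*hSξw
  linear_combination final


end FundAux

end FundAuxSection

open FundAux in
/-- The operators `P_j = ε_j x_j □ - (2E + p + q - 2)∂_j` are tangential to the isotropic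
cone `Ξ = {x ≠ 0 : Q(x) = 0}`: if a smooth function on `ℝ^{p+q} ∖ {0}` vanishes on `Ξ`,
then so does `P_j f`. -/
theorem fundOp_tangential (p q : ℕ) (j : Fin (p + q))
    (f : EuclideanSpace ℝ (Fin (p + q)) → ℝ)
    (hf : ContDiffOn ℝ (⊤ : ℕ∞) f {(0 : EuclideanSpace ℝ (Fin (p + q)))}ᶜ)
    (hvan : ∀ x : EuclideanSpace ℝ (Fin (p + q)), x ≠ 0 → quadQ p q x = 0 → f x = 0) :
    ∀ x : EuclideanSpace ℝ (Fin (p + q)), x ≠ 0 → quadQ p q x = 0 → fundOp p q j f x = 0 := by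
  intro x0 hx0 hQ0
  have hR : 0 < ∑ b, (x0 b)^2 := R_pos x0 hx0
  have hRne : (∑ b, (x0 b)^2) ≠ 0 := ne_of_gt hR
  have hsym := sym_snd p q f hf x0 hx0
  have hd2 : DifferentiableAt ℝ (fderiv ℝ f) x0 :=
    (((hf.contDiffAt (isOpen_compl_singleton.mem_nhds hx0))).fderiv_right (m := 1)
      (WithTop.coe_le_coe.mpr le_top)).differentiableAt one_ne_zero
  have hbxx : Bq p x0 x0 = 0 := by rw [← quadQ_eq_Bq p q]; exact hQ0
  have hbξx : Bq p (xv p x0) x0 = ∑ b, (x0 b)^2 := by rw [Bq_symm]; exact Bq_x_xi p x0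
  -- second partials in terms of the second fderiv
  have hpd2 : ∀ a b : Fin (p+q), pd p q a (pd p q b f) x0 =
      fderiv ℝ (fderiv ℝ f) x0 (EuclideanSpace.single a (1:ℝ)) (EuclideanSpace.single b (1:ℝ)) := by
    intro a b
    show fderiv ℝ (fun y => fderiv ℝ f y (EuclideanSpace.single b (1:ℝ))) x0
      (EuclideanSpace.single a (1:ℝ)) = _
    rw [fderiv_clm_apply hd2 (differentiableAt_const _)]
    simp
  -- sum identities
  have hsumS1 : ∑ a, x0 a * fderiv ℝ (fderiv ℝ f) x0 (EuclideanSpace.single a (1:ℝ))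
        (EuclideanSpace.single j (1:ℝ)) =
      fderiv ℝ (fderiv ℝ f) x0 x0 (EuclideanSpace.single j (1:ℝ)) := by
    calc ∑ a, x0 a * fderiv ℝ (fderiv ℝ f) x0 (EuclideanSpace.single a (1:ℝ))
          (EuclideanSpace.single j (1:ℝ))
        = ∑ a, fderiv ℝ (fderiv ℝ f) x0 (x0 a • EuclideanSpace.single a (1:ℝ))
          (EuclideanSpace.single j (1:ℝ)) :=
          Finset.sum_congr rfl fun a _ => by rw [_root_.map_smul]; simp
      _ = fderiv ℝ (fderiv ℝ f) x0 (∑ a, x0 a • EuclideanSpace.single a (1:ℝ))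
          (EuclideanSpace.single j (1:ℝ)) := by rw [_root_.map_sum, ContinuousLinearMap.sum_apply]
      _ = fderiv ℝ (fderiv ℝ f) x0 x0 (EuclideanSpace.single j (1:ℝ)) := by
          rw [sum_single_smul]
  have hsumS2 : ∑ a, x0 a * fderiv ℝ (fderiv ℝ f) x0 (xv p x0) (EuclideanSpace.single a (1:ℝ)) =
      fderiv ℝ (fderiv ℝ f) x0 (xv p x0) x0 := by
    calc ∑ a, x0 a * fderiv ℝ (fderiv ℝ f) x0 (xv p x0) (EuclideanSpace.single a (1:ℝ))
        = ∑ a, fderiv ℝ (fderiv ℝ f) x0 (xv p x0) (x0 a • EuclideanSpace.single a (1:ℝ)) :=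
          Finset.sum_congr rfl fun a _ => by rw [_root_.map_smul]; simp
      _ = fderiv ℝ (fderiv ℝ f) x0 (xv p x0) (∑ a, x0 a • EuclideanSpace.single a (1:ℝ)) := by
          rw [_root_.map_sum]
      _ = fderiv ℝ (fderiv ℝ f) x0 (xv p x0) x0 := by rw [sum_single_smul]
  -- box computation
  have hM : ∀ a : Fin (p+q), (∑ b, (x0 b)^2)^3 *
      (epsSign p a * fderiv ℝ (fderiv ℝ f) x0 (EuclideanSpace.single a (1:ℝ))
        (EuclideanSpace.single a (1:ℝ))) =
      ((∑ b, (x0 b)^2)^2 - 2*(x0 a)^2*(∑ b, (x0 b)^2)) * fderiv ℝ f x0 (xv p x0)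
        + 2*(x0 a)*(∑ b, (x0 b)^2)^2 *
            fderiv ℝ (fderiv ℝ f) x0 (xv p x0) (EuclideanSpace.single a (1:ℝ))
        - epsSign p a * (x0 a)^2*(∑ b, (x0 b)^2)
            * fderiv ℝ (fderiv ℝ f) x0 (xv p x0) (xv p x0) := by
    intro a
    have h := master p q f hf hvan x0 hx0 hQ0 (EuclideanSpace.single a (1:ℝ))
    rw [Bq_single_self, Bq_xi_single, Bq_x_single] at h
    by_cases hc : (a : ℕ) < p <;>
      simp only [epsSign, hc, if_true, if_false] at h ⊢ <;>
      first
        | linear_combination h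
        | linear_combination -h
  have hbox : (∑ b, (x0 b)^2)^3 * boxOp p q f x0 =
      ((p:ℝ)+(q:ℝ)-2) * (∑ b, (x0 b)^2)^2 * fderiv ℝ f x0 (xv p x0)
        + 2*(∑ b, (x0 b)^2)^2 * fderiv ℝ (fderiv ℝ f) x0 (xv p x0) x0 := by
    have h1 : (∑ b, (x0 b)^2)^3 * boxOp p q f x0 = ∑ a, (∑ b, (x0 b)^2)^3 *
        (epsSign p a * fderiv ℝ (fderiv ℝ f) x0 (EuclideanSpace.single a (1:ℝ))
          (EuclideanSpace.single a (1:ℝ))) := by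
      unfold boxOp
      rw [Finset.mul_sum]
      exact Finset.sum_congr rfl fun a _ => by rw [hpd2]
    rw [h1]
    have h2 : ∀ a ∈ Finset.univ, (∑ b, (x0 b)^2)^3 *
        (epsSign p a * fderiv ℝ (fderiv ℝ f) x0 (EuclideanSpace.single a (1:ℝ))
          (EuclideanSpace.single a (1:ℝ))) =
        ((∑ b, (x0 b)^2)^2 - 2*(x0 a)^2*(∑ b, (x0 b)^2)) * fderiv ℝ f x0 (xv p x0)
          + 2*(∑ b, (x0 b)^2)^2 *
              (x0 a * fderiv ℝ (fderiv ℝ f) x0 (xv p x0) (EuclideanSpace.single a (1:ℝ)))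
          - (epsSign p a * (x0 a)^2) *
              ((∑ b, (x0 b)^2) * fderiv ℝ (fderiv ℝ f) x0 (xv p x0) (xv p x0)) :=
      fun a _ => by linear_combination hM a
    rw [Finset.sum_congr rfl h2]
    rw [Finset.sum_sub_distrib, Finset.sum_add_distrib, ← Finset.sum_mul, ← Finset.mul_sum,
      ← Finset.sum_mul]
    rw [hsumS2]
    have h3 : ∑ a, ((∑ b, (x0 b)^2)^2 - 2*(x0 a)^2*(∑ b, (x0 b)^2)) =
        ((p:ℝ)+(q:ℝ)-2) * (∑ b, (x0 b)^2)^2 := by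
      rw [Finset.sum_sub_distrib, Finset.sum_const, Finset.card_univ]
      have h4 : ∑ a, 2*(x0 a)^2*(∑ b, (x0 b)^2) = 2*(∑ b, (x0 b)^2)*(∑ b, (x0 b)^2) := by
        rw [← Finset.sum_mul, ← Finset.mul_sum]
      rw [h4]
      simp only [Fintype.card_fin, nsmul_eq_mul]
      push_cast
      ring
    have h5 : ∑ a, epsSign p a * (x0 a)^2 = quadQ p q x0 := rfl
    rw [h3, h5, hQ0]
    ring
  -- euler value by polarization
  have hp1 := master p q f hf hvan x0 hx0 hQ0 (x0 + EuclideanSpace.single j (1:ℝ))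
  have hm1 := master p q f hf hvan x0 hx0 hQ0 (x0 - EuclideanSpace.single j (1:ℝ))
  have hBp : Bq p x0 (x0 + EuclideanSpace.single j (1:ℝ)) = epsSign p j * x0 j := by
    rw [Bq_add_right, hbxx, Bq_x_single]; ring
  have hBm : Bq p x0 (x0 - EuclideanSpace.single j (1:ℝ)) = -(epsSign p j * x0 j) := by
    rw [Bq_sub_right, hbxx, Bq_x_single]; ring
  have hDp : Bq p (xv p x0) (x0 + EuclideanSpace.single j (1:ℝ)) = (∑ b, (x0 b)^2) + x0 j := by
    rw [Bq_add_right, hbξx, Bq_xi_single]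
  have hDm : Bq p (xv p x0) (x0 - EuclideanSpace.single j (1:ℝ)) = (∑ b, (x0 b)^2) - x0 j := by
    rw [Bq_sub_right, hbξx, Bq_xi_single]
  have hQp : Bq p (x0 + EuclideanSpace.single j (1:ℝ)) (x0 + EuclideanSpace.single j (1:ℝ)) =
      epsSign p j + 2*(epsSign p j * x0 j) := by
    rw [Bq_add_right, Bq_symm p (x0 + EuclideanSpace.single j (1:ℝ)) x0, Bq_add_right,
      Bq_symm p (x0 + EuclideanSpace.single j (1:ℝ)) (EuclideanSpace.single j (1:ℝ)),
      Bq_add_right, hbxx, Bq_x_single, Bq_symm p (EuclideanSpace.single j (1:ℝ)) x0,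
      Bq_x_single, Bq_single_self]
    ring
  have hQm : Bq p (x0 - EuclideanSpace.single j (1:ℝ)) (x0 - EuclideanSpace.single j (1:ℝ)) =
      epsSign p j - 2*(epsSign p j * x0 j) := by
    rw [Bq_sub_right, Bq_symm p (x0 - EuclideanSpace.single j (1:ℝ)) x0, Bq_sub_right,
      Bq_symm p (x0 - EuclideanSpace.single j (1:ℝ)) (EuclideanSpace.single j (1:ℝ)),
      Bq_sub_right, hbxx, Bq_x_single, Bq_symm p (EuclideanSpace.single j (1:ℝ)) x0,
      Bq_x_single, Bq_single_self]
    ring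
  rw [hBp, hDp, hQp] at hp1
  rw [hBm, hDm, hQm] at hm1
  simp only [_root_.map_add, _root_.map_sub, ContinuousLinearMap.add_apply, ContinuousLinearMap.sub_apply]
    at hp1 hm1
  have heulerval : (∑ b, (x0 b)^2)^3 * fderiv ℝ (fderiv ℝ f) x0 x0 (EuclideanSpace.single j (1:ℝ))
      = (∑ b, (x0 b)^2)^2 * (epsSign p j * x0 j *
          fderiv ℝ (fderiv ℝ f) x0 (xv p x0) x0) := by
    linear_combination (hp1 - hm1)/4
      + ((∑ b, (x0 b)^2)^3/2) * (hsym x0 (EuclideanSpace.single j (1:ℝ)))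
  -- first derivative value
  have hdfj : (∑ b, (x0 b)^2) * fderiv ℝ f x0 (EuclideanSpace.single j (1:ℝ)) =
      (epsSign p j * x0 j) * fderiv ℝ f x0 (xv p x0) := by
    have h := df_formula p q f hf hvan x0 hx0 hQ0 (EuclideanSpace.single j (1:ℝ))
    rw [Bq_x_single] at h
    exact h
  -- euler operator value
  have heuler2 : eulerOp p q (pd p q j f) x0 =
      fderiv ℝ (fderiv ℝ f) x0 x0 (EuclideanSpace.single j (1:ℝ)) := by
    unfold eulerOp
    rw [← hsumS1]
    exact Finset.sum_congr rfl fun a _ => by rw [hpd2]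
  -- final assembly
  have hkey : (∑ b, (x0 b)^2)^3 * fundOp p q j f x0 = 0 := by
    unfold fundOp
    rw [heuler2]
    have hpdj : pd p q j f x0 = fderiv ℝ f x0 (EuclideanSpace.single j (1:ℝ)) := rfl
    rw [hpdj]
    linear_combination (epsSign p j * x0 j) * hbox - 2 * heulerval
      - ((p:ℝ)+(q:ℝ)-2)*(∑ b, (x0 b)^2)^2*hdfj
  rcases mul_eq_zero.mp hkey with h' | h'
  · exact absurd h' (pow_ne_zero 3 hRne)
  · exact h'
end

section
/- The fundamental differential operators on the isotropic cone mutually commute: for all 1 ≤ i, j ≤ p+q, the operators P_i := ε_i x_i □ − (2E + p + q − 2) ∂/∂x_i satisfy [P_i, P_j] f ≡ 0 on Ξ for every smooth f, i.e. P_i P_j − P_j P_i vanishes modulo the ideal generated by the quadratic form Q. -/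
open MeasureTheory

variable (p q : ℕ)

open Filter

variable {p q : ℕ}
private abbrev Vs (p q : ℕ) := EuclideanSpace ℝ (Fin (p + q))
private def Sm (p q : ℕ) (g : Vs p q → ℝ) : Prop :=
  ContDiffOn ℝ (⊤ : ℕ∞) g {(0 : Vs p q)}ᶜ
private lemma nhds0 {x : Vs p q} (hx : x ≠ 0) : {(0 : Vs p q)}ᶜ ∈ nhds x :=
  isOpen_compl_singleton.mem_nhds hx
private lemma smDiffAt {g : Vs p q → ℝ} (hg : Sm p q g) {x : Vs p q} (hx : x ≠ 0) :
    DifferentiableAt ℝ g x :=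
  ((hg.differentiableOn (by simp)).differentiableAt (nhds0 hx))
private lemma sm_fderiv {g : Vs p q → ℝ} (hg : Sm p q g) :
    ContDiffOn ℝ (⊤ : ℕ∞) (fderiv ℝ g) {(0 : Vs p q)}ᶜ :=
  ((contDiffOn_infty_iff_fderiv_of_isOpen isOpen_compl_singleton).1 hg).2
private lemma sm_pd {g : Vs p q → ℝ} (hg : Sm p q g) (a : Fin (p + q)) :
    Sm p q (pd p q a g) :=
  (sm_fderiv hg).clm_apply contDiffOn_const

private lemma sm_coord (b : Fin (p + q)) :
    ContDiffOn ℝ (⊤ : ℕ∞) (fun y : Vs p q => y b) {(0 : Vs p q)}ᶜ :=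
  ((EuclideanSpace.proj (𝕜 := ℝ) b).contDiff).contDiffOn

private lemma sm_box {g : Vs p q → ℝ} (hg : Sm p q g) : Sm p q (boxOp p q g) := by
  unfold Sm boxOp
  exact ContDiffOn.sum fun a _ => contDiffOn_const.mul (sm_pd (sm_pd hg a) a)

private lemma sm_euler {g : Vs p q → ℝ} (hg : Sm p q g) : Sm p q (eulerOp p q g) := by
  unfold Sm eulerOp
  exact ContDiffOn.sum fun a _ => (sm_coord a).mul (sm_pd hg a)

private lemma diff_coord (b : Fin (p + q)) {x : Vs p q} :
    DifferentiableAt ℝ (fun y : Vs p q => y b) x :=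
  (EuclideanSpace.proj (𝕜 := ℝ) b).differentiable.differentiableAt

-- pointwise rules
private lemma pd_congr {g₁ g₂ : Vs p q → ℝ} (a : Fin (p + q)) {x : Vs p q} (hx : x ≠ 0)
    (h : ∀ y : Vs p q, y ≠ 0 → g₁ y = g₂ y) : pd p q a g₁ x = pd p q a g₂ x := by
  have he : g₁ =ᶠ[nhds x] g₂ := eventually_of_mem (nhds0 hx) h
  simp only [pd, he.fderiv_eq]

private lemma pd_add {u v : Vs p q → ℝ} (a : Fin (p + q)) {x : Vs p q}
    (hu : DifferentiableAt ℝ u x) (hv : DifferentiableAt ℝ v x) :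
    pd p q a (fun y => u y + v y) x = pd p q a u x + pd p q a v x := by
  simp only [pd, fderiv_fun_add hu hv, ContinuousLinearMap.add_apply]

private lemma pd_sub {u v : Vs p q → ℝ} (a : Fin (p + q)) {x : Vs p q}
    (hu : DifferentiableAt ℝ u x) (hv : DifferentiableAt ℝ v x) :
    pd p q a (fun y => u y - v y) x = pd p q a u x - pd p q a v x := by
  simp only [pd, fderiv_fun_sub hu hv, ContinuousLinearMap.sub_apply]

private lemma pd_const_mul {u : Vs p q → ℝ} (a : Fin (p + q)) {x : Vs p q}
    (hu : DifferentiableAt ℝ u x) (c : ℝ) :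
    pd p q a (fun y => c * u y) x = c * pd p q a u x := by
  simp only [pd, fderiv_const_mul hu c, ContinuousLinearMap.smul_apply, smul_eq_mul]

private lemma pd_mul {u v : Vs p q → ℝ} (a : Fin (p + q)) {x : Vs p q}
    (hu : DifferentiableAt ℝ u x) (hv : DifferentiableAt ℝ v x) :
    pd p q a (fun y => u y * v y) x = u x * pd p q a v x + v x * pd p q a u x := by
  simp only [pd, fderiv_fun_mul hu hv, ContinuousLinearMap.add_apply,
    ContinuousLinearMap.smul_apply, smul_eq_mul]

private lemma pd_coord (a b : Fin (p + q)) (x : Vs p q) :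
    pd p q a (fun y : Vs p q => y b) x = if b = a then 1 else 0 := by
  have h : (fun y : Vs p q => y b) = ⇑(EuclideanSpace.proj (𝕜 := ℝ) b) := rfl
  rw [pd, h, (EuclideanSpace.proj (𝕜 := ℝ) b).fderiv]
  simp [EuclideanSpace.single_apply]

private lemma pd_sum {g : Fin (p + q) → Vs p q → ℝ} (a : Fin (p + q)) {x : Vs p q}
    (h : ∀ b, DifferentiableAt ℝ (g b) x) :
    pd p q a (fun y => ∑ b, g b y) x = ∑ b, pd p q a (g b) x := by
  simp only [pd, fderiv_fun_sum fun b _ => h b, ContinuousLinearMap.sum_apply]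

private lemma pd_comm {g : Vs p q → ℝ} (hg : Sm p q g) (a b : Fin (p + q)) {x : Vs p q}
    (hx : x ≠ 0) : pd p q a (pd p q b g) x = pd p q b (pd p q a g) x := by
  have hdf : DifferentiableAt ℝ (fderiv ℝ g) x :=
    ((sm_fderiv hg).differentiableOn (by simp)).differentiableAt (nhds0 hx)
  have hev : ∀ᶠ y in nhds x, HasFDerivAt g (fderiv ℝ g y) y := by
    filter_upwards [nhds0 hx] with y hy
    exact (smDiffAt hg hy).hasFDerivAt
  have hsymm := second_derivative_symmetric_of_eventually hev hdf.hasFDerivAt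
  have h2 : ∀ c v : Vs p q, fderiv ℝ (fun y => fderiv ℝ g y c) x v
      = fderiv ℝ (fderiv ℝ g) x v c := by
    intro c v
    have h3 := fderiv_clm_apply (c := fderiv ℝ g) (u := fun _ => c) hdf (differentiableAt_const c)
    simp only [fderiv_fun_const, Pi.zero_apply, ContinuousLinearMap.comp_zero, add_zero] at h3
    rw [h3]
    simp [ContinuousLinearMap.flip_apply]
  show fderiv ℝ (fun y => fderiv ℝ g y (EuclideanSpace.single b 1)) x (EuclideanSpace.single a 1)
      = fderiv ℝ (fun y => fderiv ℝ g y (EuclideanSpace.single a 1)) x (EuclideanSpace.single b 1)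
  rw [h2, h2]
  exact hsymm _ _

-- congruence for derived operators
private lemma euler_congr {g₁ g₂ : Vs p q → ℝ} {x : Vs p q} (hx : x ≠ 0)
    (h : ∀ y : Vs p q, y ≠ 0 → g₁ y = g₂ y) : eulerOp p q g₁ x = eulerOp p q g₂ x := by
  unfold eulerOp
  exact Finset.sum_congr rfl fun a _ => by rw [pd_congr a hx h]

-- expansions
private lemma pd_box_expand {g : Vs p q → ℝ} (hg : Sm p q g) (b : Fin (p + q)) {x : Vs p q}
    (hx : x ≠ 0) :
    pd p q b (boxOp p q g) x = ∑ a, epsSign p a * pd p q b (pd p q a (pd p q a g)) x := by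
  have h1 : pd p q b (fun y => ∑ a, epsSign p a * pd p q a (pd p q a g) y) x
      = ∑ a, pd p q b (fun y => epsSign p a * pd p q a (pd p q a g) y) x :=
    pd_sum b fun a => (smDiffAt (sm_pd (sm_pd hg a) a) hx).const_mul _
  have h2 : boxOp p q g = fun y => ∑ a, epsSign p a * pd p q a (pd p q a g) y := rfl
  rw [h2, h1]
  exact Finset.sum_congr rfl fun a _ => pd_const_mul b (smDiffAt (sm_pd (sm_pd hg a) a) hx) _

private lemma pd_coord_mul {h : Vs p q → ℝ} (a b : Fin (p + q)) {x : Vs p q}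
    (hh : DifferentiableAt ℝ h x) :
    pd p q b (fun y => y a * h y) x = x a * pd p q b h x + (if a = b then 1 else 0) * h x := by
  rw [pd_mul b (diff_coord a) hh, pd_coord]; ring

-- I1 : box and pd commute
private lemma box_pd_comm {g : Vs p q → ℝ} (hg : Sm p q g) (b : Fin (p + q)) {x : Vs p q}
    (hx : x ≠ 0) : pd p q b (boxOp p q g) x = boxOp p q (pd p q b g) x := by
  rw [pd_box_expand hg b hx]
  unfold boxOp
  refine Finset.sum_congr rfl fun a _ => ?_
  congr 1
  rw [pd_comm (sm_pd hg a) b a hx]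
  exact pd_congr a hx fun y hy => pd_comm hg b a hy

-- I3 : pd of euler
private lemma pd_euler {g : Vs p q → ℝ} (hg : Sm p q g) (b : Fin (p + q)) {x : Vs p q}
    (hx : x ≠ 0) :
    pd p q b (eulerOp p q g) x = eulerOp p q (pd p q b g) x + pd p q b g x := by
  have h2 : eulerOp p q g = fun y => ∑ a, y a * pd p q a g y := rfl
  rw [h2, pd_sum b fun a => (diff_coord a).fun_mul (smDiffAt (sm_pd hg a) hx)]
  have h3 : ∀ a, pd p q b (fun y => y a * pd p q a g y) x
      = x a * pd p q a (pd p q b g) x + (if a = b then 1 else 0) * pd p q a g x := by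
    intro a
    rw [pd_coord_mul a b (smDiffAt (sm_pd hg a) hx), pd_comm hg b a hx]
  simp only [h3]
  rw [Finset.sum_add_distrib]
  congr 1
  simp [Finset.sum_ite_eq']

private lemma eps_sq (a : Fin (p + q)) : epsSign p a * epsSign p a = 1 := by
  unfold epsSign; split <;> norm_num

private lemma pd_cm {h : Vs p q → ℝ} (c : ℝ) (a b : Fin (p + q)) {x : Vs p q}
    (hh : DifferentiableAt ℝ h x) :
    pd p q b (fun y => c * y a * h y) x
      = c * x a * pd p q b h x + (if a = b then 1 else 0) * (c * h x) := by
  have hu : DifferentiableAt ℝ (fun y : Vs p q => c * y a) x := (diff_coord a).const_mul c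
  rw [pd_mul b hu hh]
  have h2 : pd p q b (fun y : Vs p q => c * y a) x = c * (if a = b then 1 else 0) := by
    rw [pd_const_mul b (diff_coord a) c, pd_coord]
  rw [h2]; ring

private lemma diff_cm {h : Vs p q → ℝ} (c : ℝ) (a : Fin (p + q)) {x : Vs p q}
    (hh : DifferentiableAt ℝ h x) :
    DifferentiableAt ℝ (fun y : Vs p q => c * y a * h y) x :=
  ((diff_coord a).const_mul c).mul hh

-- linearity of euler / box (pointwise)
private lemma euler_sub {u v : Vs p q → ℝ} {x : Vs p q}
    (hu : DifferentiableAt ℝ u x) (hv : DifferentiableAt ℝ v x) :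
    eulerOp p q (fun y => u y - v y) x = eulerOp p q u x - eulerOp p q v x := by
  unfold eulerOp
  rw [← Finset.sum_sub_distrib]
  exact Finset.sum_congr rfl fun a _ => by rw [pd_sub a hu hv]; ring

private lemma euler_add {u v : Vs p q → ℝ} {x : Vs p q}
    (hu : DifferentiableAt ℝ u x) (hv : DifferentiableAt ℝ v x) :
    eulerOp p q (fun y => u y + v y) x = eulerOp p q u x + eulerOp p q v x := by
  unfold eulerOp
  rw [← Finset.sum_add_distrib]
  exact Finset.sum_congr rfl fun a _ => by rw [pd_add a hu hv]; ring

private lemma euler_const_mul {u : Vs p q → ℝ} {x : Vs p q}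
    (hu : DifferentiableAt ℝ u x) (c : ℝ) :
    eulerOp p q (fun y => c * u y) x = c * eulerOp p q u x := by
  unfold eulerOp
  rw [Finset.mul_sum]
  exact Finset.sum_congr rfl fun a _ => by rw [pd_const_mul a hu c]; ring

private lemma euler_cm {h : Vs p q → ℝ} (c : ℝ) (j : Fin (p + q)) {x : Vs p q}
    (hh : ∀ a : Fin (p + q), DifferentiableAt ℝ (pd p q a h) x)
    (hhx : DifferentiableAt ℝ h x) :
    eulerOp p q (fun y => c * y j * h y) x
      = c * x j * eulerOp p q h x + c * x j * h x := by
  unfold eulerOp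
  have hstep : ∀ a : Fin (p + q), x a * pd p q a (fun y => c * y j * h y) x
      = c * x j * (x a * pd p q a h x) + (if j = a then c * x j * h x else 0) := by
    intro a
    rw [pd_cm c j a hhx]
    split <;> rename_i hja
    · subst hja; ring
    · ring
  simp only [hstep]
  rw [Finset.sum_add_distrib, ← Finset.mul_sum, Finset.sum_ite_eq]
  simp

private lemma box_sub {u v : Vs p q → ℝ} (hu : Sm p q u) (hv : Sm p q v) {x : Vs p q}
    (hx : x ≠ 0) :
    boxOp p q (fun y => u y - v y) x = boxOp p q u x - boxOp p q v x := by
  unfold boxOp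
  rw [← Finset.sum_sub_distrib]
  refine Finset.sum_congr rfl fun a _ => ?_
  rw [pd_congr a hx (fun y hy => pd_sub a (smDiffAt hu hy) (smDiffAt hv hy)),
    pd_sub a (smDiffAt (sm_pd hu a) hx) (smDiffAt (sm_pd hv a) hx)]
  ring

private lemma box_add {u v : Vs p q → ℝ} (hu : Sm p q u) (hv : Sm p q v) {x : Vs p q}
    (hx : x ≠ 0) :
    boxOp p q (fun y => u y + v y) x = boxOp p q u x + boxOp p q v x := by
  unfold boxOp
  rw [← Finset.sum_add_distrib]
  refine Finset.sum_congr rfl fun a _ => ?_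
  rw [pd_congr a hx (fun y hy => pd_add a (smDiffAt hu hy) (smDiffAt hv hy)),
    pd_add a (smDiffAt (sm_pd hu a) hx) (smDiffAt (sm_pd hv a) hx)]
  ring

private lemma box_const_mul {u : Vs p q → ℝ} (hu : Sm p q u) {x : Vs p q} (hx : x ≠ 0)
    (c : ℝ) : boxOp p q (fun y => c * u y) x = c * boxOp p q u x := by
  unfold boxOp
  rw [Finset.mul_sum]
  refine Finset.sum_congr rfl fun a _ => ?_
  rw [pd_congr a hx (fun y hy => pd_const_mul a (smDiffAt hu hy) c),
    pd_const_mul a (smDiffAt (sm_pd hu a) hx) c]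
  ring

-- I2 : box of (c * y_j * h)
private lemma box_cm {h : Vs p q → ℝ} (hh : Sm p q h) (j : Fin (p + q)) {x : Vs p q}
    (hx : x ≠ 0) :
    boxOp p q (fun y => epsSign p j * y j * h y) x
      = epsSign p j * x j * boxOp p q h x + 2 * pd p q j h x := by
  unfold boxOp
  have hstep : ∀ a : Fin (p + q),
      epsSign p a * pd p q a (pd p q a fun y => epsSign p j * y j * h y) x
        = epsSign p j * x j * (epsSign p a * pd p q a (pd p q a h) x)
          + (if j = a then 2 * (epsSign p a * epsSign p j) * pd p q a h x else 0) := by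
    intro a
    have h1 : pd p q a (pd p q a fun y => epsSign p j * y j * h y) x
        = pd p q a (fun y => epsSign p j * y j * pd p q a h y
            + (if j = a then 1 else 0) * (epsSign p j * h y)) x :=
      pd_congr a hx fun y hy => pd_cm _ j a (smDiffAt hh hy)
    rw [h1, pd_add a (diff_cm _ j (smDiffAt (sm_pd hh a) hx))
        ((smDiffAt hh hx).const_mul _ |>.const_mul _),
      pd_cm _ j a (smDiffAt (sm_pd hh a) hx),
      pd_const_mul a ((smDiffAt hh hx).const_mul _) _,
      pd_const_mul a (smDiffAt hh hx) _]
    split <;> rename_i hja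
    · subst hja; ring
    · ring
  simp only [hstep]
  rw [Finset.sum_add_distrib, ← Finset.mul_sum, Finset.sum_ite_eq]
  simp [eps_sq]

-- I6 : box of euler
private lemma box_euler {g : Vs p q → ℝ} (hg : Sm p q g) {x : Vs p q} (hx : x ≠ 0) :
    boxOp p q (eulerOp p q g) x = eulerOp p q (boxOp p q g) x + 2 * boxOp p q g x := by
  have hstep : ∀ a : Fin (p + q),
      pd p q a (pd p q a (eulerOp p q g)) x
        = eulerOp p q (pd p q a (pd p q a g)) x + 2 * pd p q a (pd p q a g) x := by
    intro a
    have h1 : pd p q a (pd p q a (eulerOp p q g)) x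
        = pd p q a (fun y => eulerOp p q (pd p q a g) y + pd p q a g y) x :=
      pd_congr a hx fun y hy => pd_euler hg a hy
    rw [h1, pd_add a (smDiffAt (sm_euler (sm_pd hg a)) hx) (smDiffAt (sm_pd hg a) hx),
      pd_euler (sm_pd hg a) a hx]
    ring
  have hswap : ∑ a : Fin (p + q), epsSign p a * eulerOp p q (pd p q a (pd p q a g)) x
      = eulerOp p q (boxOp p q g) x := by
    unfold eulerOp
    simp only [Finset.mul_sum]
    rw [Finset.sum_comm]
    refine Finset.sum_congr rfl fun b _ => ?_
    rw [pd_box_expand hg b hx, Finset.mul_sum]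
    exact Finset.sum_congr rfl fun a _ => by ring
  have hL : boxOp p q (eulerOp p q g) x
      = ∑ a : Fin (p + q), epsSign p a
          * (eulerOp p q (pd p q a (pd p q a g)) x + 2 * pd p q a (pd p q a g) x) := by
    unfold boxOp
    exact Finset.sum_congr rfl fun a _ => by rw [hstep a]
  rw [hL]
  simp only [mul_add]
  rw [Finset.sum_add_distrib, hswap]
  congr 1
  unfold boxOp
  rw [Finset.mul_sum]
  exact Finset.sum_congr rfl fun a _ => by ring

private lemma sm_A {f : Vs p q → ℝ} (hf : Sm p q f) (j : Fin (p + q)) :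
    Sm p q (fun y => epsSign p j * y j * boxOp p q f y) :=
  (contDiffOn_const.mul (sm_coord j)).mul (sm_box hf)

private lemma sm_B {f : Vs p q → ℝ} (hf : Sm p q f) (j : Fin (p + q)) :
    Sm p q (fun y => 2 * eulerOp p q (pd p q j f) y + ((p : ℝ) + (q : ℝ) - 2) * pd p q j f y) :=
  (contDiffOn_const.mul (sm_euler (sm_pd hf j))).add (contDiffOn_const.mul (sm_pd hf j))

private lemma diff_B {f : Vs p q → ℝ} (hf : Sm p q f) (j : Fin (p + q)) {x : Vs p q}
    (hx : x ≠ 0) :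
    DifferentiableAt ℝ
      (fun y => 2 * eulerOp p q (pd p q j f) y + ((p : ℝ) + (q : ℝ) - 2) * pd p q j f y) x :=
  ((smDiffAt (sm_euler (sm_pd hf j)) hx).const_mul 2).add
    ((smDiffAt (sm_pd hf j) hx).const_mul _)

private lemma fund_eq {f : Vs p q → ℝ} (j : Fin (p + q)) :
    fundOp p q j f = fun y => (fun y => epsSign p j * y j * boxOp p q f y) y
      - (fun y => 2 * eulerOp p q (pd p q j f) y
          + ((p : ℝ) + (q : ℝ) - 2) * pd p q j f y) y := rfl

-- M1 : box of fundOp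
private lemma box_fund {f : Vs p q → ℝ} (hf : Sm p q f) (j : Fin (p + q)) {x : Vs p q}
    (hx : x ≠ 0) :
    boxOp p q (fundOp p q j f) x
      = epsSign p j * x j * boxOp p q (boxOp p q f) x
        - 2 * eulerOp p q (pd p q j (boxOp p q f)) x
        - ((p : ℝ) + (q : ℝ)) * pd p q j (boxOp p q f) x := by
  rw [fund_eq j, box_sub (sm_A hf j) (sm_B hf j) hx, box_cm (sm_box hf) j hx,
    box_add (contDiffOn_const.mul (sm_euler (sm_pd hf j)))
      (contDiffOn_const.mul (sm_pd hf j)) hx,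
    box_const_mul (sm_euler (sm_pd hf j)) hx 2, box_const_mul (sm_pd hf j) hx _,
    box_euler (sm_pd hf j) hx]
  have h1 : boxOp p q (pd p q j f) x = pd p q j (boxOp p q f) x :=
    (box_pd_comm hf j hx).symm
  have h2 : eulerOp p q (boxOp p q (pd p q j f)) x
      = eulerOp p q (pd p q j (boxOp p q f)) x :=
    euler_congr hx fun y hy => (box_pd_comm hf j hy).symm
  rw [h1, h2]
  ring

-- M2 : pd of fundOp
private lemma pd_fund {f : Vs p q → ℝ} (hf : Sm p q f) (i j : Fin (p + q)) {x : Vs p q}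
    (hx : x ≠ 0) :
    pd p q i (fundOp p q j f) x
      = ((if j = i then 1 else 0) * epsSign p j) * boxOp p q f x
        + epsSign p j * x j * pd p q i (boxOp p q f) x
        - 2 * eulerOp p q (pd p q i (pd p q j f)) x
        - (((p : ℝ) + (q : ℝ))) * pd p q i (pd p q j f) x := by
  rw [fund_eq j, pd_sub i (diff_cm _ j (smDiffAt (sm_box hf) hx)) (diff_B hf j hx),
    pd_cm _ j i (smDiffAt (sm_box hf) hx),
    pd_add i ((smDiffAt (sm_euler (sm_pd hf j)) hx).const_mul 2)
      ((smDiffAt (sm_pd hf j) hx).const_mul _),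
    pd_const_mul i (smDiffAt (sm_euler (sm_pd hf j)) hx) 2,
    pd_const_mul i (smDiffAt (sm_pd hf j) hx) _,
    pd_euler (sm_pd hf j) i hx]
  ring

-- M3 : euler of pd of fundOp
private lemma euler_pd_fund {f : Vs p q → ℝ} (hf : Sm p q f) (i j : Fin (p + q)) {x : Vs p q}
    (hx : x ≠ 0) :
    eulerOp p q (pd p q i (fundOp p q j f)) x
      = ((if j = i then 1 else 0) * epsSign p j) * eulerOp p q (boxOp p q f) x
        + epsSign p j * x j * eulerOp p q (pd p q i (boxOp p q f)) x
        + epsSign p j * x j * pd p q i (boxOp p q f) x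
        - 2 * eulerOp p q (eulerOp p q (pd p q i (pd p q j f))) x
        - (((p : ℝ) + (q : ℝ))) * eulerOp p q (pd p q i (pd p q j f)) x := by
  have hG : eulerOp p q (pd p q i (fundOp p q j f)) x
      = eulerOp p q (fun y =>
          ((if j = i then 1 else 0) * epsSign p j) * boxOp p q f y
            + epsSign p j * y j * pd p q i (boxOp p q f) y
            - 2 * eulerOp p q (pd p q i (pd p q j f)) y
            - (((p : ℝ) + (q : ℝ))) * pd p q i (pd p q j f) y) x :=
    euler_congr hx fun y hy => pd_fund hf i j hy
  have d1 : ∀ y : Vs p q, y ≠ 0 → True := fun _ _ => trivial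
  have hd1 : DifferentiableAt ℝ
      (fun y => ((if j = i then 1 else 0) * epsSign p j) * boxOp p q f y) x :=
    (smDiffAt (sm_box hf) hx).const_mul _
  have hd2 : DifferentiableAt ℝ
      (fun y : Vs p q => epsSign p j * y j * pd p q i (boxOp p q f) y) x :=
    diff_cm _ j (smDiffAt (sm_pd (sm_box hf) i) hx)
  have hd3 : DifferentiableAt ℝ
      (fun y => 2 * eulerOp p q (pd p q i (pd p q j f)) y) x :=
    (smDiffAt (sm_euler (sm_pd (sm_pd hf j) i)) hx).const_mul 2
  have hd4 : DifferentiableAt ℝ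
      (fun y => (((p : ℝ) + (q : ℝ))) * pd p q i (pd p q j f) y) x :=
    (smDiffAt (sm_pd (sm_pd hf j) i) hx).const_mul _
  rw [hG, euler_sub ((hd1.fun_add hd2).fun_sub hd3) hd4, euler_sub (hd1.fun_add hd2) hd3,
    euler_add hd1 hd2,
    euler_const_mul (smDiffAt (sm_box hf) hx) _,
    euler_cm _ j (fun a => smDiffAt (sm_pd (sm_pd (sm_box hf) i) a) hx)
      (smDiffAt (sm_pd (sm_box hf) i) hx),
    euler_const_mul (smDiffAt (sm_euler (sm_pd (sm_pd hf j) i)) hx) 2,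
    euler_const_mul (smDiffAt (sm_pd (sm_pd hf j) i) hx) _]
  ring

-- Normal form for the composition of two fundamental operators
private lemma fund_fund {f : Vs p q → ℝ} (hf : Sm p q f) (i j : Fin (p + q)) {x : Vs p q}
    (hx : x ≠ 0) :
    fundOp p q i (fundOp p q j f) x
      = epsSign p i * epsSign p j * x i * x j * boxOp p q (boxOp p q f) x
        - epsSign p i * x i * (2 * eulerOp p q (pd p q j (boxOp p q f)) x
            + ((p : ℝ) + (q : ℝ)) * pd p q j (boxOp p q f) x)
        - epsSign p j * x j * (2 * eulerOp p q (pd p q i (boxOp p q f)) x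
            + ((p : ℝ) + (q : ℝ)) * pd p q i (boxOp p q f) x)
        - ((if j = i then 1 else 0) * epsSign p j)
            * (2 * eulerOp p q (boxOp p q f) x
                + ((p : ℝ) + (q : ℝ) - 2) * boxOp p q f x)
        + 4 * eulerOp p q (eulerOp p q (pd p q i (pd p q j f))) x
        + (4 * ((p : ℝ) + (q : ℝ) - 2) + 4) * eulerOp p q (pd p q i (pd p q j f)) x
        + ((p : ℝ) + (q : ℝ) - 2) * ((p : ℝ) + (q : ℝ)) * pd p q i (pd p q j f) x := by
  have h0 : fundOp p q i (fundOp p q j f) x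
      = epsSign p i * x i * boxOp p q (fundOp p q j f) x
        - (2 * eulerOp p q (pd p q i (fundOp p q j f)) x
            + ((p : ℝ) + (q : ℝ) - 2) * pd p q i (fundOp p q j f) x) := rfl
  rw [h0, box_fund hf j hx, euler_pd_fund hf i j hx, pd_fund hf i j hx]
  ring

private lemma delta_symm (i j : Fin (p + q)) :
    ((if j = i then 1 else 0) * epsSign p j : ℝ)
      = ((if i = j then 1 else 0) * epsSign p i : ℝ) := by
  by_cases h : i = j
  · subst h; simp
  · have h' : ¬ j = i := fun hh => h hh.symm
    simp [h, h']

theorem fundOp_commute' (i j : Fin (p + q))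
    (f : EuclideanSpace ℝ (Fin (p + q)) → ℝ)
    (hf : Sm p q f) :
    ∀ x : EuclideanSpace ℝ (Fin (p + q)), x ≠ 0 →
      fundOp p q i (fundOp p q j f) x - fundOp p q j (fundOp p q i f) x = 0 := by
  intro x hx
  rw [fund_fund hf i j hx, fund_fund hf j i hx, delta_symm i j]
  have e1 : pd p q i (pd p q j f) x = pd p q j (pd p q i f) x := pd_comm hf i j hx
  have e2 : eulerOp p q (pd p q i (pd p q j f)) x
      = eulerOp p q (pd p q j (pd p q i f)) x :=
    euler_congr hx fun y hy => pd_comm hf i j hy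
  have e3 : eulerOp p q (eulerOp p q (pd p q i (pd p q j f))) x
      = eulerOp p q (eulerOp p q (pd p q j (pd p q i f))) x :=
    euler_congr hx fun y hy => euler_congr hy fun z hz => pd_comm hf i j hz
  rw [e1, e2, e3]
  ring

/-- The fundamental differential operators mutually commute on the isotropic cone: for any
smooth function `f` on `ℝ^{p+q} ∖ {0}`, the commutator `[P_i, P_j] f` vanishes on
`Ξ = {x ≠ 0 : Q(x) = 0}`; hence the induced operators `R_i, R_j` on `Ξ` commute. -/
theorem fundOp_commute (p q : ℕ) (i j : Fin (p + q))
    (f : EuclideanSpace ℝ (Fin (p + q)) → ℝ)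
    (hf : ContDiffOn ℝ (⊤ : ℕ∞) f {(0 : EuclideanSpace ℝ (Fin (p + q)))}ᶜ) :
    ∀ x : EuclideanSpace ℝ (Fin (p + q)), x ≠ 0 → quadQ p q x = 0 →
      fundOp p q i (fundOp p q j f) x - fundOp p q j (fundOp p q i f) x = 0 := by
  intro x hx _
  have hf' : Sm p q f := hf.of_le (by simp)
  exact fundOp_commute' i j f hf' x hx
end
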